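/- Let Q be a quadratic form on a finite-dimensional 𝔽₂-vector space V, and suppose V = V₁ ⊕ V₂ with V₁ nontrivial, Q restricted to V₂ identically zero, and Q(v₁ + v₂) = Q(v₁) for all v₁ ∈ V₁, v₂ ∈ V₂ (i.e. Q = q ⊕ 0^{⊕n} where q = Q|_{V₁} and n = dim V₂). Then Q is admissible if and only if q is admissible. -/

import Mathlib

/-- The polar form `B_Q(u,v) = Q(u+v) − Q(u) − Q(v)` of a map `Q : V → 𝔽₂`. -/
def polarF {V : Type*} [Add V] (Q : V → ZMod 2) (u v : V) : ZMod 2 :=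
  Q (u + v) - Q u - Q v

/-- `Q : V → 𝔽₂` is a quadratic form: `Q (a • v) = a² Q v` and the polar form is bilinear. -/
def IsQuadraticForm {V : Type*} [AddCommGroup V] [Module (ZMod 2) V]
    (Q : V → ZMod 2) : Prop :=
  (∀ (a : ZMod 2) (v : V), Q (a • v) = a * a * Q v) ∧
  (∀ u v w : V, polarF Q (u + v) w = polarF Q u w + polarF Q v w) ∧
  (∀ (a : ZMod 2) (u v : V), polarF Q (a • u) v = a * polarF Q u v) ∧
  (∀ u v w : V, polarF Q u (v + w) = polarF Q u v + polarF Q u w) ∧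
  (∀ (a : ZMod 2) (u v : V), polarF Q u (a • v) = a * polarF Q u v)

/-- A form `Q` on an `𝔽₂`-vector space is admissible if there is a basis `v₁,…,v_ℓ` with
`Q(vᵢ) = 1` for all `i`, and for every `i` there is `j` with `B_Q(vᵢ,vⱼ) = 1`. -/
def IsAdmissible {V : Type*} [AddCommGroup V] [Module (ZMod 2) V] (Q : V → ZMod 2) : Prop :=
  ∃ (ℓ : ℕ) (b : Module.Basis (Fin ℓ) (ZMod 2) V),
    (∀ i, Q (b i) = 1) ∧ (∀ i, ∃ j, polarF Q (b i) (b j) = 1)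

/-!
A spanning family whose members all have `Q = 1` and each pair to `1` with some member already
yields a basis with the same two properties: extract a basis `t` from the family; if some `u ∈ t`
paired to `0` with all of `t`, the linear form `B_Q(u, ·)` would vanish, although `u` pairs to `1`
with some member of the family.

If `Q` is admissible, project an admissible basis of `V` onto `V₁` along `V₂`: since
`Q = q ∘ proj`, the image is a spanning family of `V₁` as above. Conversely, if `c` is an
admissible basis of `V₁` and `d` is a basis of `V₂`, the family `cᵢ, dₖ + c₀` spans `V`; the
shift by `c₀` makes `Q(dₖ + c₀) = 1`, and `dₖ + c₀` pairs like `c₀`.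
-/

section

open Submodule Set

section Span

variable {R M : Type*} [Ring R] [AddCommGroup M] [Module R M]

theorem Submodule.span_range_coe_basis {ι : Type*} (p : Submodule R M) (c : Module.Basis ι R p) :
    span R (range fun i => (c i : M)) = p := by
  rw [show (range fun i => (c i : M)) = p.subtype '' range c from range_comp _ _, span_image,
    c.span_eq, map_subtype_top]

theorem Submodule.span_range_sum_elim_add_eq_top {ι κ : Type*} {p q : Submodule R M}
    (hpq : IsCompl p q) (c : Module.Basis ι R p) (d : Module.Basis κ R q) (i₀ : ι) :
    span R (range (Sum.elim (fun i => (c i : M)) fun k => (d k : M) + c i₀)) = ⊤ := by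
  set S := span R (range (Sum.elim (fun i => (c i : M)) fun k => (d k : M) + c i₀))
  have hc : ∀ i, (c i : M) ∈ S := fun i => subset_span ⟨Sum.inl i, rfl⟩
  have hd : ∀ k, (d k : M) ∈ S := fun k => by
    have := sub_mem (subset_span ⟨Sum.inr k, rfl⟩ : (d k : M) + c i₀ ∈ S) (hc i₀)
    rwa [add_sub_cancel_right] at this
  rw [eq_top_iff, ← hpq.sup_eq_top, ← p.span_range_coe_basis c, ← q.span_range_coe_basis d]
  exact sup_le (span_le.mpr (range_subset_iff.mpr hc)) (span_le.mpr (range_subset_iff.mpr hd))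

end Span

variable {V W : Type*} [AddCommGroup V] [Module (ZMod 2) V] [AddCommGroup W] [Module (ZMod 2) W]

theorem polarF_comp (Q : W → ZMod 2) (f : V →ₗ[ZMod 2] W) (u v : V) :
    polarF (Q ∘ f) u v = polarF Q (f u) (f v) := by
  simp only [polarF, Function.comp_apply, map_add]

theorem IsQuadraticForm.comp {Q : W → ZMod 2} (hQ : IsQuadraticForm Q) (f : V →ₗ[ZMod 2] W) :
    IsQuadraticForm (Q ∘ f) := by
  obtain ⟨hsmul, haddl, hsmull, haddr, hsmulr⟩ := hQ
  refine ⟨fun a v => ?_, fun u v w => ?_, fun a u v => ?_, fun u v w => ?_, fun a u v => ?_⟩ <;>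
    simp only [polarF_comp, Function.comp_apply, map_add, map_smul]
  exacts [hsmul a (f v), haddl _ _ _, hsmull _ _ _, haddr _ _ _, hsmulr _ _ _]

def IsQuadraticForm.polarRight {Q : V → ZMod 2} (hQ : IsQuadraticForm Q) (u : V) :
    V →ₗ[ZMod 2] ZMod 2 where
  toFun := polarF Q u
  map_add' := hQ.2.2.2.1 u
  map_smul' a v := hQ.2.2.2.2 a u v

theorem ZMod.eq_one_of_ne_zero : ∀ a : ZMod 2, a ≠ 0 → a = 1 := by decide

theorem isAdmissible_of_basis {ι : Type*} [Fintype ι] (Q : V → ZMod 2)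
    (b : Module.Basis ι (ZMod 2) V) (hone : ∀ i, Q (b i) = 1)
    (hpair : ∀ i, ∃ j, polarF Q (b i) (b j) = 1) : IsAdmissible Q := by
  let e := Fintype.equivFin ι
  refine ⟨Fintype.card ι, b.reindex e, fun i => ?_, fun i => ?_⟩
  · simpa using hone (e.symm i)
  · obtain ⟨j, hj⟩ := hpair (e.symm i)
    exact ⟨e j, by simpa using hj⟩

theorem isAdmissible_of_span {Q : V → ZMod 2} (hQ : IsQuadraticForm Q) {ι : Type*} [Finite ι]
    (x : ι → V) (hspan : span (ZMod 2) (range x) = ⊤) (hone : ∀ i, Q (x i) = 1)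
    (hpair : ∀ i, ∃ j, polarF Q (x i) (x j) = 1) : IsAdmissible Q := by
  obtain ⟨t, hts, hspan', hli⟩ := exists_linearIndependent (ZMod 2) (range x)
  have : Fintype t := ((finite_range x).subset hts).fintype
  let b : Module.Basis t (ZMod 2) V := .mk hli (by rw [Subtype.range_coe, hspan', hspan])
  have hb : ∀ s, b s = (s : V) := Module.Basis.mk_apply hli _
  refine isAdmissible_of_basis Q b (fun s => ?_) (fun s => ?_)
  · obtain ⟨i, hi⟩ := hts s.2
    rw [hb, ← hi, hone]
  · obtain ⟨i, hi⟩ := hts s.2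
    obtain ⟨j, hj⟩ := hpair i
    have hj' : hQ.polarRight s (x j) = 1 := hi ▸ hj
    have hne : hQ.polarRight s ≠ 0 := fun h0 => by simp [h0] at hj'
    obtain ⟨r, hr⟩ : ∃ r, hQ.polarRight s (b r) ≠ 0 := by
      by_contra! h
      exact hne (b.ext fun r => h r)
    exact ⟨r, by rw [hb]; exact ZMod.eq_one_of_ne_zero _ hr⟩

theorem IsAdmissible.of_comp_surjective {q : W → ZMod 2} (hq : IsQuadraticForm q)
    {f : V →ₗ[ZMod 2] W} (hf : Function.Surjective f) (h : IsAdmissible (q ∘ f)) :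
    IsAdmissible q := by
  obtain ⟨ℓ, b, hone, hpair⟩ := h
  refine isAdmissible_of_span hq (f ∘ b) ?_ hone fun i => ?_
  · rw [range_comp, span_image, b.span_eq, Submodule.map_top, LinearMap.range_eq_top.mpr hf]
  · obtain ⟨j, hj⟩ := hpair i
    exact ⟨j, by rwa [polarF_comp] at hj⟩

section Splitting

variable {Q : V → ZMod 2} {V₁ V₂ : Submodule (ZMod 2) V}
  (hsplit : ∀ v₁ ∈ V₁, ∀ v₂ ∈ V₂, Q (v₁ + v₂) = Q v₁)
include hsplit

theorem comp_projectionOnto_eq (hcompl : IsCompl V₁ V₂) :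
    (fun x : V₁ => Q x) ∘ V₁.projectionOnto V₂ hcompl = Q := by
  funext v
  have := hsplit _ (projection_apply_mem hcompl v) _ (sub_projection_mem hcompl v)
  rw [add_sub_cancel] at this
  exact this.symm

theorem polarF_add_left_of_mem {v₁ v₂ w : V} (hv₁ : v₁ ∈ V₁) (hv₂ : v₂ ∈ V₂) (hw : w ∈ V₁) :
    polarF Q (v₁ + v₂) w = polarF Q v₁ w := by
  simp only [polarF, hsplit _ hv₁ _ hv₂, add_right_comm v₁ v₂ w, hsplit _ (add_mem hv₁ hw) _ hv₂]

theorem isAdmissible_of_isAdmissible_restrict [FiniteDimensional (ZMod 2) V]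
    (hQ : IsQuadraticForm Q) (hcompl : IsCompl V₁ V₂) (hV₁ : V₁ ≠ ⊥)
    (h : IsAdmissible fun x : V₁ => Q x) : IsAdmissible Q := by
  obtain ⟨ℓ, c, hone, hpair⟩ := h
  have : Nontrivial V₁ := nontrivial_iff_ne_bot.mpr hV₁
  obtain ⟨i₀⟩ := c.index_nonempty
  let d := Module.finBasis (ZMod 2) V₂
  refine isAdmissible_of_span hQ _ (span_range_sum_elim_add_eq_top hcompl c d i₀) ?_ ?_
  · rintro (i | k)
    · exact hone i
    · rw [Sum.elim_inr, add_comm, hsplit _ (c i₀).2 _ (d k).2]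
      exact hone i₀
  · rintro (i | k)
    · obtain ⟨j, hj⟩ := hpair i
      exact ⟨Sum.inl j, hj⟩
    · obtain ⟨j, hj⟩ := hpair i₀
      refine ⟨Sum.inl j, ?_⟩
      rw [Sum.elim_inr, Sum.elim_inl, add_comm,
        polarF_add_left_of_mem hsplit (c i₀).2 (d k).2 (c j).2]
      exact hj

end Splitting

end

theorem statement_1_general {V : Type*} [AddCommGroup V] [Module (ZMod 2) V]
    [FiniteDimensional (ZMod 2) V]
    (Q : V → ZMod 2) (hQ : IsQuadraticForm Q)
    (V₁ V₂ : Submodule (ZMod 2) V) (hcompl : IsCompl V₁ V₂) (hV₁ : V₁ ≠ ⊥)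
    (hsplit : ∀ v₁ ∈ V₁, ∀ v₂ ∈ V₂, Q (v₁ + v₂) = Q v₁) :
    IsAdmissible Q ↔ IsAdmissible (fun x : V₁ => Q ↑x) := by
  refine ⟨fun h => ?_, isAdmissible_of_isAdmissible_restrict hsplit hQ hcompl hV₁⟩
  refine IsAdmissible.of_comp_surjective (hQ.comp V₁.subtype)
    (Submodule.projectionOnto_surjective hcompl) ?_
  rwa [comp_projectionOnto_eq hsplit hcompl]

/-- If `Q = q ⊕ 0^{⊕n}` with respect to a splitting `V = V₁ ⊕ V₂` (with `V₁` nontrivial,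
`Q` vanishing on `V₂`, and `Q(v₁+v₂) = Q(v₁)`), then `Q` is admissible iff `q = Q|_{V₁}` is. -/
theorem statement_1 {V : Type*} [AddCommGroup V] [Module (ZMod 2) V]
    [FiniteDimensional (ZMod 2) V]
    (Q : V → ZMod 2) (hQ : IsQuadraticForm Q)
    (V₁ V₂ : Submodule (ZMod 2) V) (hcompl : IsCompl V₁ V₂) (hV₁ : V₁ ≠ ⊥)
    (hzero : ∀ v ∈ V₂, Q v = 0)
    (hsplit : ∀ v₁ ∈ V₁, ∀ v₂ ∈ V₂, Q (v₁ + v₂) = Q v₁) :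
    IsAdmissible Q ↔ IsAdmissible (fun x : V₁ => Q ↑x) :=
  statement_1_general Q hQ V₁ V₂ hcompl hV₁ hsplit
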